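/- arXiv:2212.02956 — 3 statements merged into one kernel-verified Lean document; each statement's English description precedes it below -/
import Mathlib

section
/- Every closed B-isotropic subspace L of a super Hilbert space V is the restricted graph graph′(u) = graph(u) ∩ ker(u)^⊥ of a unique partial isometry u : V⁺ → V⁻; conversely, the restricted graph of any partial isometry u : V⁺ → V⁻ is a closed B-isotropic subspace. -/
/-!
On a `B`-isotropic subspace `L` the two components of every vector have equal norms, so `L` is
the graph of a linear isometry `v` from its first projection `P` to `V⁻`; `P` is closed because
`z ↦ z.fst` is bounded below on the complete space `L`. Extending `v` by zero on `Pᗮ` gives the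
partial isometry. Conversely, by polarization a partial isometry preserves inner products on
`(ker u)ᗮ`, which is the isotropy of `graph′(u)`. Finally `graph′(u)` determines `(ker u)ᗮ` and
`u` on it, while `u` vanishes on `(ker u)ᗮᗮ = ker u`, so it determines `u`.
-/

noncomputable section

open Submodule ContinuousLinearMap

/-- Build an element of the `L²`-product from its two components. -/
abbrev p2 {α β : Type*} [AddCommGroup α] [Module ℝ α] [AddCommGroup β] [Module ℝ β]
    (a : α) (b : β) : WithLp 2 (α × β) :=
  (WithLp.linearEquiv 2 ℝ (α × β)).symm (a, b)

/-- The `L²`-product as a linear equiv with the plain product. -/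
abbrev unL2 {α β : Type*} [AddCommGroup α] [Module ℝ α] [AddCommGroup β] [Module ℝ β] :
    WithLp 2 (α × β) →ₗ[ℝ] α × β :=
  (WithLp.linearEquiv 2 ℝ (α × β)).toLinearMap

abbrev mkL2 {α β : Type*} [AddCommGroup α] [Module ℝ α] [AddCommGroup β] [Module ℝ β] :
    (α × β) →ₗ[ℝ] WithLp 2 (α × β) :=
  ((WithLp.linearEquiv 2 ℝ (α × β)).symm : (α × β) ≃ₗ[ℝ] WithLp 2 (α × β)).toLinearMap

section Defs

variable {Vp Vm : Type*} [NormedAddCommGroup Vp] [InnerProductSpace ℝ Vp]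
  [NormedAddCommGroup Vm] [InnerProductSpace ℝ Vm]

/-- The grading operator `Γ` on the super Hilbert space `V = Vp ⊕ Vm` (`Γ = 1` on `V⁺ = Vp`,
`Γ = -1` on `V⁻ = Vm`). -/
def sGrading : WithLp 2 (Vp × Vm) →ₗ[ℝ] WithLp 2 (Vp × Vm) :=
  mkL2 ∘ₗ ((LinearMap.fst ℝ Vp Vm).prod (-(LinearMap.snd ℝ Vp Vm))) ∘ₗ unL2

/-- `L` is isotropic for the form `B(x, y) = ⟪J x, y⟫`. -/
def IsIsotropicWith {W : Type*} [NormedAddCommGroup W] [InnerProductSpace ℝ W]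
    (J : W →ₗ[ℝ] W) (L : Submodule ℝ W) : Prop :=
  ∀ x ∈ L, ∀ y ∈ L, (inner ℝ (J x) y : ℝ) = 0

/-- `L` is a Lagrangian with respect to the grading `J`, i.e. `J L = Lᗮ`. -/
def IsLagrangianWith {W : Type*} [NormedAddCommGroup W] [InnerProductSpace ℝ W]
    (J : W →ₗ[ℝ] W) (L : Submodule ℝ W) : Prop :=
  L.map J = Lᗮ

/-- `L ⊆ V = Vp ⊕ Vm` is `B`-isotropic, where `B(x,y) = ⟪Γ x, y⟫`. -/
def IsIsotropic (L : Submodule ℝ (WithLp 2 (Vp × Vm))) : Prop :=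
  IsIsotropicWith sGrading L

/-- The image `Γ L` of a subspace under the grading operator. -/
def gradingMap (L : Submodule ℝ (WithLp 2 (Vp × Vm))) : Submodule ℝ (WithLp 2 (Vp × Vm)) :=
  L.map sGrading

/-- `L` is a Lagrangian in the super Hilbert space `Vp ⊕ Vm`: `Γ L = Lᗮ`. -/
def IsLagrangian (L : Submodule ℝ (WithLp 2 (Vp × Vm))) : Prop :=
  IsLagrangianWith sGrading L

/-- The restricted graph `graph′(u) = graph(u) ∩ (ker u)ᗮ` of `u : V⁺ → V⁻`, inside
`V = Vp ⊕ Vm`. -/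
def graphPI (u : Vp →L[ℝ] Vm) : Submodule ℝ (WithLp 2 (Vp × Vm)) :=
  (LinearMap.ker u.toLinearMap)ᗮ.map (mkL2 ∘ₗ (LinearMap.id : Vp →ₗ[ℝ] Vp).prod u.toLinearMap)

/-- The full graph `graph(u) = {(x, u x)}` of `u : V⁺ → V⁻`, inside `V = Vp ⊕ Vm`. -/
def graphFull (u : Vp →ₗ[ℝ] Vm) : Submodule ℝ (WithLp 2 (Vp × Vm)) :=
  (⊤ : Submodule ℝ Vp).map (mkL2 ∘ₗ (LinearMap.id : Vp →ₗ[ℝ] Vp).prod u)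

/-- The restricted graph of an operator `w : V⁻ → V⁺`, viewed inside `V = Vp ⊕ Vm`
via `y ↦ (w y, y)`. -/
def graphPIrev (w : Vm →L[ℝ] Vp) : Submodule ℝ (WithLp 2 (Vp × Vm)) :=
  (LinearMap.ker w.toLinearMap)ᗮ.map (mkL2 ∘ₗ w.toLinearMap.prod (LinearMap.id : Vm →ₗ[ℝ] Vm))

/-- `u` is a partial isometry: it is isometric on `(ker u)ᗮ`. -/
def IsPartialIsometry (u : Vp →L[ℝ] Vm) : Prop :=
  ∀ x ∈ (LinearMap.ker u.toLinearMap)ᗮ, ‖u x‖ = ‖x‖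

/-- `u` is unitary: a surjective isometry. -/
def IsUnitaryOp {E F : Type*} [NormedAddCommGroup E] [InnerProductSpace ℝ E]
    [NormedAddCommGroup F] [InnerProductSpace ℝ F] (u : E →L[ℝ] F) : Prop :=
  (∀ x, ‖u x‖ = ‖x‖) ∧ Function.Surjective u

end Defs

section CorrDefs

variable {Ap Am Bp Bm : Type*} [NormedAddCommGroup Ap] [InnerProductSpace ℝ Ap]
  [NormedAddCommGroup Am] [InnerProductSpace ℝ Am]
  [NormedAddCommGroup Bp] [InnerProductSpace ℝ Bp]
  [NormedAddCommGroup Bm] [InnerProductSpace ℝ Bm]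

/-- The grading `Γ(x₀, x₁) = (-Γ₀ x₀, Γ₁ x₁)` on `Π V₀ ⊕ V₁`, where `V₀ = Ap ⊕ Am` and
`V₁ = Bp ⊕ Bm`. -/
def corrGrading :
    WithLp 2 (WithLp 2 (Ap × Am) × WithLp 2 (Bp × Bm)) →ₗ[ℝ]
      WithLp 2 (WithLp 2 (Ap × Am) × WithLp 2 (Bp × Bm)) :=
  mkL2 ∘ₗ ((-(sGrading : WithLp 2 (Ap × Am) →ₗ[ℝ] WithLp 2 (Ap × Am))).prodMap
    (sGrading : WithLp 2 (Bp × Bm) →ₗ[ℝ] WithLp 2 (Bp × Bm))) ∘ₗ unL2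

/-- `L` is a Lagrangian correspondence from `V₀ = Ap ⊕ Am` to `V₁ = Bp ⊕ Bm`, i.e. a
Lagrangian in `Π V₀ ⊕ V₁`. -/
def IsLagCorr (L : Submodule ℝ (WithLp 2 (WithLp 2 (Ap × Am) × WithLp 2 (Bp × Bm)))) : Prop :=
  IsLagrangianWith corrGrading L

/-- `L` is `B`-isotropic in `Π V₀ ⊕ V₁`. -/
def IsIsotropicCorr (L : Submodule ℝ (WithLp 2 (WithLp 2 (Ap × Am) × WithLp 2 (Bp × Bm)))) :
    Prop :=
  IsIsotropicWith corrGrading L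

/-- The graph of a map `u : (ΠV₀ ⊕ V₁)⁺ = V₀⁻ ⊕ V₁⁺ → V₀⁺ ⊕ V₁⁻ = (ΠV₀ ⊕ V₁)⁻`, as a linear
map into `ΠV₀ ⊕ V₁`; an element `(b, c)` is sent to `((u(b,c)₁, b), (c, u(b,c)₂))`. -/
def corrGraphMap (u : WithLp 2 (Am × Bp) →L[ℝ] WithLp 2 (Ap × Bm)) :
    WithLp 2 (Am × Bp) →ₗ[ℝ] WithLp 2 (WithLp 2 (Ap × Am) × WithLp 2 (Bp × Bm)) :=
  mkL2 ∘ₗ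
    ((mkL2 ∘ₗ (((LinearMap.fst ℝ Ap Bm) ∘ₗ unL2 ∘ₗ u.toLinearMap).prod
        ((LinearMap.fst ℝ Am Bp) ∘ₗ unL2))).prod
      (mkL2 ∘ₗ (((LinearMap.snd ℝ Am Bp) ∘ₗ unL2).prod
        ((LinearMap.snd ℝ Ap Bm) ∘ₗ unL2 ∘ₗ u.toLinearMap))))

/-- The graph of `u : (ΠV₀ ⊕ V₁)⁺ → (ΠV₀ ⊕ V₁)⁻` as a subspace of `ΠV₀ ⊕ V₁`. -/
def corrGraph (u : WithLp 2 (Am × Bp) →L[ℝ] WithLp 2 (Ap × Bm)) :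
    Submodule ℝ (WithLp 2 (WithLp 2 (Ap × Am) × WithLp 2 (Bp × Bm))) :=
  LinearMap.range (corrGraphMap u)

end CorrDefs

section Comp

variable {W0 W1 W2 : Type*} [NormedAddCommGroup W0] [InnerProductSpace ℝ W0]
  [NormedAddCommGroup W1] [InnerProductSpace ℝ W1]
  [NormedAddCommGroup W2] [InnerProductSpace ℝ W2]

/-- The composition `L₁₂ ∘ L₀₁ = {(x₀, x₂) | ∃ x₁, (x₀, x₁) ∈ L₀₁ ∧ (x₁, x₂) ∈ L₁₂}` of two
correspondences `L₀₁ ⊆ W0 ⊕ W1` and `L₁₂ ⊆ W1 ⊕ W2`. -/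
def compCorr (L01 : Submodule ℝ (WithLp 2 (W0 × W1))) (L12 : Submodule ℝ (WithLp 2 (W1 × W2))) :
    Submodule ℝ (WithLp 2 (W0 × W2)) :=
  Submodule.map
    (mkL2 ∘ₗ
      (((LinearMap.fst ℝ W0 W1 ∘ₗ unL2) ∘ₗ
          LinearMap.fst ℝ (WithLp 2 (W0 × W1)) (WithLp 2 (W1 × W2))).prod
        ((LinearMap.snd ℝ W1 W2 ∘ₗ unL2) ∘ₗ
          LinearMap.snd ℝ (WithLp 2 (W0 × W1)) (WithLp 2 (W1 × W2)))))
    ((L01.prod L12) ⊓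
      LinearMap.ker
        (((LinearMap.snd ℝ W0 W1 ∘ₗ unL2) ∘ₗ
            LinearMap.fst ℝ (WithLp 2 (W0 × W1)) (WithLp 2 (W1 × W2))) -
          ((LinearMap.fst ℝ W1 W2 ∘ₗ unL2) ∘ₗ
            LinearMap.snd ℝ (WithLp 2 (W0 × W1)) (WithLp 2 (W1 × W2)))))

end Comp

/-- `u` is a Hilbert–Schmidt operator: `∑ ‖u eᵢ‖²` converges for every Hilbert basis. -/
def IsHilbertSchmidt {E F : Type*} [NormedAddCommGroup E] [InnerProductSpace ℝ E]
    [NormedAddCommGroup F] [InnerProductSpace ℝ F] (u : E →L[ℝ] F) : Prop :=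
  ∀ (ι : Type) (b : HilbertBasis ι ℝ E), Summable fun i => ‖u (b i)‖ ^ 2

section RestrictedGraph

variable {Vp Vm : Type*} [NormedAddCommGroup Vp] [InnerProductSpace ℝ Vp]
  [NormedAddCommGroup Vm] [InnerProductSpace ℝ Vm]

theorem inner_sGrading_apply (x y : WithLp 2 (Vp × Vm)) :
    inner ℝ (sGrading x) y = inner ℝ x.fst y.fst - inner ℝ x.snd y.snd := by
  simp [sGrading, WithLp.prod_inner_apply, sub_eq_add_neg]

theorem IsIsotropic.norm_snd_eq_norm_fst {L : Submodule ℝ (WithLp 2 (Vp × Vm))}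
    (hL : IsIsotropic L) {z : WithLp 2 (Vp × Vm)} (hz : z ∈ L) : ‖z.snd‖ = ‖z.fst‖ := by
  have h := hL z hz z hz
  rw [inner_sGrading_apply, real_inner_self_eq_norm_sq, real_inner_self_eq_norm_sq,
    sub_eq_zero] at h
  exact (pow_left_inj₀ (norm_nonneg _) (norm_nonneg _) two_ne_zero).1 h.symm

theorem IsIsotropic.norm_le_two_mul_norm_fst {L : Submodule ℝ (WithLp 2 (Vp × Vm))}
    (hL : IsIsotropic L) {z : WithLp 2 (Vp × Vm)} (hz : z ∈ L) : ‖z‖ ≤ 2 * ‖z.fst‖ := by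
  have h := WithLp.prod_norm_sq_eq_of_L2 z
  rw [hL.norm_snd_eq_norm_fst hz] at h
  nlinarith [norm_nonneg z, norm_nonneg z.fst]

theorem mem_graphPI {u : Vp →L[ℝ] Vm} {z : WithLp 2 (Vp × Vm)} :
    z ∈ graphPI u ↔ z.fst ∈ (LinearMap.ker u.toLinearMap)ᗮ ∧ u z.fst = z.snd := by
  constructor
  · rintro ⟨x, hx, rfl⟩
    exact ⟨hx, rfl⟩
  · rintro ⟨hx, hu⟩
    exact ⟨z.fst, hx, WithLp.ofLp_injective 2 (Prod.ext rfl hu)⟩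

theorem isClosed_graphPI (u : Vp →L[ℝ] Vm) :
    IsClosed (graphPI u : Set (WithLp 2 (Vp × Vm))) := by
  have h : (graphPI u : Set (WithLp 2 (Vp × Vm))) =
      WithLp.fst ⁻¹' (LinearMap.ker u.toLinearMap)ᗮ ∩ {z | u z.fst = z.snd} := by
    ext z; exact mem_graphPI
  rw [h]
  exact ((isClosed_orthogonal _).preimage (WithLp.fstL 2 ℝ Vp Vm).continuous).inter
    (isClosed_eq (by fun_prop) (WithLp.sndL 2 ℝ Vp Vm).continuous)

theorem IsPartialIsometry.inner_map_map {u : Vp →L[ℝ] Vm} (hu : IsPartialIsometry u)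
    {x y : Vp} (hx : x ∈ (LinearMap.ker u.toLinearMap)ᗮ)
    (hy : y ∈ (LinearMap.ker u.toLinearMap)ᗮ) :
    inner ℝ (u x) (u y) = inner ℝ x y :=
  (⟨u.toLinearMap ∘ₗ Submodule.subtype _, fun z => hu z z.2⟩ :
    (LinearMap.ker u.toLinearMap)ᗮ →ₗᵢ[ℝ] Vm).inner_map_map ⟨x, hx⟩ ⟨y, hy⟩

theorem IsPartialIsometry.isIsotropic_graphPI {u : Vp →L[ℝ] Vm} (hu : IsPartialIsometry u) :
    IsIsotropic (graphPI u) := by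
  rintro z hz w hw
  rw [mem_graphPI] at hz hw
  rw [inner_sGrading_apply, ← hz.2, ← hw.2, hu.inner_map_map hz.1 hw.1, sub_self]

theorem orthogonal_orthogonal_ker [CompleteSpace Vp] (u : Vp →L[ℝ] Vm) :
    (LinearMap.ker u.toLinearMap)ᗮᗮ = LinearMap.ker u.toLinearMap := by
  rw [Submodule.orthogonal_orthogonal_eq_closure]
  exact (isClosed_ker u).submodule_topologicalClosure_eq

theorem graphPI_injective [CompleteSpace Vp] :
    Function.Injective (graphPI : (Vp →L[ℝ] Vm) → Submodule ℝ (WithLp 2 (Vp × Vm))) := by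
  intro u u' h
  have hu_mem : ∀ x ∈ (LinearMap.ker u.toLinearMap)ᗮ, WithLp.toLp 2 (x, u x) ∈ graphPI u' :=
    fun x hx => h ▸ ⟨x, hx, rfl⟩
  have hu'_mem : ∀ x ∈ (LinearMap.ker u'.toLinearMap)ᗮ, WithLp.toLp 2 (x, u' x) ∈ graphPI u :=
    fun x hx => h ▸ ⟨x, hx, rfl⟩
  have hK : (LinearMap.ker u.toLinearMap)ᗮ = (LinearMap.ker u'.toLinearMap)ᗮ :=
    le_antisymm (fun x hx => (mem_graphPI.1 (hu_mem x hx)).1)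
      (fun x hx => (mem_graphPI.1 (hu'_mem x hx)).1)
  have hker : LinearMap.ker u.toLinearMap = LinearMap.ker u'.toLinearMap := by
    rw [← orthogonal_orthogonal_ker u, hK, orthogonal_orthogonal_ker]
  ext x
  obtain ⟨a, ha, b, hb, rfl⟩ := (LinearMap.ker u.toLinearMap)ᗮ.exists_add_mem_mem_orthogonal x
  rw [orthogonal_orthogonal_ker] at hb
  have hb' : b ∈ LinearMap.ker u'.toLinearMap := hker ▸ hb
  rw [LinearMap.mem_ker] at hb hb'
  have hagree : u' a = u a := (mem_graphPI.1 (hu_mem a ha)).2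
  simp only [map_add, ContinuousLinearMap.coe_coe] at hb hb' ⊢
  rw [hb, hb', hagree]

end RestrictedGraph

namespace LinearIsometry

variable {E F : Type*} [NormedAddCommGroup E] [InnerProductSpace ℝ E]
  [NormedAddCommGroup F] [InnerProductSpace ℝ F] {K : Submodule ℝ E} [K.HasOrthogonalProjection]

def extendByZero (v : K →ₗᵢ[ℝ] F) : E →L[ℝ] F :=
  v.toContinuousLinearMap ∘L K.orthogonalProjectionOnto

variable (v : K →ₗᵢ[ℝ] F)

theorem extendByZero_coe (x : K) : v.extendByZero x = v x := by
  simp [extendByZero, Submodule.orthogonalProjectionOnto_mem_subspace_eq_self]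

theorem ker_extendByZero : LinearMap.ker v.extendByZero.toLinearMap = Kᗮ := by
  ext x
  simp [extendByZero, map_eq_zero_iff v v.injective,
    Submodule.orthogonalProjectionOnto_eq_zero_iff]

theorem orthogonal_ker_extendByZero : (LinearMap.ker v.extendByZero.toLinearMap)ᗮ = K := by
  rw [ker_extendByZero, Submodule.orthogonal_orthogonal]

theorem isPartialIsometry_extendByZero : IsPartialIsometry v.extendByZero := by
  intro x hx
  rw [orthogonal_ker_extendByZero] at hx
  exact (congrArg norm (extendByZero_coe v ⟨x, hx⟩)).trans (v.norm_map _)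

theorem mem_graphPI_extendByZero {z : WithLp 2 (E × F)} :
    z ∈ graphPI v.extendByZero ↔ ∃ h : z.fst ∈ K, v ⟨z.fst, h⟩ = z.snd := by
  rw [mem_graphPI, orthogonal_ker_extendByZero]
  exact ⟨fun ⟨h, hz⟩ => ⟨h, (extendByZero_coe v ⟨_, h⟩).symm.trans hz⟩,
    fun ⟨h, hz⟩ => ⟨h, (extendByZero_coe v ⟨_, h⟩).trans hz⟩⟩

end LinearIsometry

section Existence

variable {Vp Vm : Type*} [NormedAddCommGroup Vp] [InnerProductSpace ℝ Vp] [CompleteSpace Vp]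
  [NormedAddCommGroup Vm] [InnerProductSpace ℝ Vm] [CompleteSpace Vm]
  {L : Submodule ℝ (WithLp 2 (Vp × Vm))}

theorem IsIsotropic.isClosed_range_fst (hLc : IsClosed (L : Set (WithLp 2 (Vp × Vm))))
    (hL : IsIsotropic L) : IsClosed (Set.range fun z : L => (z : WithLp 2 (Vp × Vm)).fst) := by
  have : CompleteSpace L := hLc.completeSpace_coe
  let fstL : L →L[ℝ] Vp := WithLp.fstL 2 ℝ Vp Vm ∘L L.subtypeL
  have hanti : AntilipschitzWith 2 fstL :=
    fstL.antilipschitz_of_bound fun z => hL.norm_le_two_mul_norm_fst z.2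
  exact hanti.isClosed_range fstL.uniformContinuous

theorem IsIsotropic.exists_isPartialIsometry_eq_graphPI
    (hLc : IsClosed (L : Set (WithLp 2 (Vp × Vm)))) (hL : IsIsotropic L) :
    ∃ u : Vp →L[ℝ] Vm, IsPartialIsometry u ∧ L = graphPI u := by
  -- `L` read in the plain product, where `Submodule.toLinearPMap` applies
  set G : Submodule ℝ (Vp × Vm) := L.comap mkL2
  have hG : ∀ w ∈ G, w.1 = 0 → w.2 = 0 := fun w hw h0 => by
    simpa [h0] using hL.norm_snd_eq_norm_fst hw
  set f := G.toLinearPMap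
  have hf_mem (x : f.domain) : WithLp.toLp 2 ((x : Vp), f x) ∈ L :=
    G.mem_graph_toLinearPMap hG x
  have hdom : IsClosed (f.domain : Set Vp) := by
    convert hL.isClosed_range_fst hLc using 1
    ext x
    constructor
    · rintro ⟨w, hw, rfl⟩
      exact ⟨⟨_, hw⟩, rfl⟩
    · rintro ⟨⟨z, hz⟩, rfl⟩
      exact ⟨z.ofLp, hz, rfl⟩
  have : CompleteSpace f.domain := hdom.completeSpace_coe
  let v : f.domain →ₗᵢ[ℝ] Vm := ⟨f.toFun, fun x => hL.norm_snd_eq_norm_fst (hf_mem x)⟩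
  refine ⟨v.extendByZero, v.isPartialIsometry_extendByZero, ?_⟩
  ext z
  rw [v.mem_graphPI_extendByZero]
  have hmem : z ∈ L ↔ z.ofLp ∈ f.graph := by
    rw [Submodule.toLinearPMap_graph_eq G hG]
    exact Iff.rfl
  rw [hmem, LinearPMap.mem_graph_iff]
  constructor
  · rintro ⟨⟨x, hx⟩, rfl, hxz⟩
    exact ⟨hx, hxz⟩
  · rintro ⟨hz, hvz⟩
    exact ⟨⟨_, hz⟩, rfl, hvz⟩

end Existence

/-- Every closed `B`-isotropic subspace of a super Hilbert space is the
restricted graph of a unique partial isometry `u : V⁺ → V⁻`; conversely, the restricted graph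
of every partial isometry is a closed `B`-isotropic subspace. -/
theorem closed_isotropic_iff_graph_partial_isometry
    {Vp Vm : Type*} [NormedAddCommGroup Vp] [InnerProductSpace ℝ Vp] [CompleteSpace Vp]
    [NormedAddCommGroup Vm] [InnerProductSpace ℝ Vm] [CompleteSpace Vm] :
    (∀ L : Submodule ℝ (WithLp 2 (Vp × Vm)), IsClosed (L : Set (WithLp 2 (Vp × Vm))) →
      IsIsotropic L → ∃! u : Vp →L[ℝ] Vm, IsPartialIsometry u ∧ L = graphPI u) ∧
    (∀ u : Vp →L[ℝ] Vm, IsPartialIsometry u →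
      IsClosed ((graphPI u : Submodule ℝ (WithLp 2 (Vp × Vm))) : Set (WithLp 2 (Vp × Vm))) ∧
        IsIsotropic (graphPI u)) := by
  refine ⟨fun L hLc hL => ?_, fun u hu => ⟨isClosed_graphPI u, hu.isIsotropic_graphPI⟩⟩
  obtain ⟨u, hu, rfl⟩ := hL.exists_isPartialIsometry_eq_graphPI hLc
  exact ⟨u, ⟨hu, rfl⟩, fun u' hu' => graphPI_injective hu'.2.symm⟩
end
end

section
/- Let T : V₀ → V₁ be an invertible closed densely defined operator between super Hilbert spaces with grading operators Γ₀, Γ₁. Then graph(T) is a Lagrangian in ΠV₀ ⊕ V₁ if and only if T⁻¹ = Γ₀ T* Γ₁. -/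
/-!
In `ΠV₀ ⊕ V₁`, the orthogonal complement of `graph T` is `{(u, v) | (v, -u) ∈ graph T*}`, while
`Γ (graph T) = {(u, v) | (-Γ₀ u, Γ₁ v) ∈ graph T}`. After the substitution `a = -Γ₀ u`,
`b = Γ₁ v`, the Lagrangian condition `Γ (graph T) = (graph T)ᗮ` reads
`(a, b) ∈ graph T ↔ (Γ₁ b, Γ₀ a) ∈ graph T*`, which is also what the equality of the flipped
graph of `T` with `(Γ₁ × Γ₀) (graph T*)` says.
-/

noncomputable section

open Submodule ContinuousLinearMap

open Function

theorem Submodule.mem_map_iff_of_inverse {R M N : Type*} [Semiring R] [AddCommMonoid M]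
    [Module R M] [AddCommMonoid N] [Module R N] {f : M →ₗ[R] N} {g : N →ₗ[R] M}
    (h₁ : LeftInverse g f) (h₂ : RightInverse g f) {p : Submodule R M} {x : N} :
    x ∈ p.map f ↔ g x ∈ p := by
  rw [← SetLike.mem_coe, map_coe, Set.mem_image_iff_of_inverse h₁ h₂, SetLike.mem_coe]

theorem Submodule.map_swap_eq_map_prodMap_iff {R E F : Type*} [Semiring R] [AddCommMonoid E]
    [Module R E] [AddCommMonoid F] [Module R F] {g : Submodule R (E × F)}
    {h : Submodule R (F × E)} {J : F →ₗ[R] F} {K : E →ₗ[R] E} (hJ : Involutive J)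
    (hK : Involutive K) :
    g.map ((LinearMap.snd R E F).prod (LinearMap.fst R E F)) = h.map (J.prodMap K) ↔
      ∀ a b, (a, b) ∈ g ↔ (J b, K a) ∈ h := by
  have hJK : Involutive (J.prodMap K) := fun x => Prod.ext (hJ x.1) (hK x.2)
  rw [SetLike.ext_iff, Prod.forall, forall_comm]
  simp only [mem_map_iff_of_inverse (f := (LinearMap.snd R E F).prod (LinearMap.fst R E F))
    (g := (LinearMap.snd R F E).prod (LinearMap.fst R F E)) (fun _ => rfl) (fun _ => rfl),
    mem_map_iff_of_inverse hJK.leftInverse hJK.rightInverse]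
  rfl

theorem sGrading_involutive {Vp Vm : Type*} [NormedAddCommGroup Vp] [InnerProductSpace ℝ Vp]
    [NormedAddCommGroup Vm] [InnerProductSpace ℝ Vm] :
    Involutive (sGrading : WithLp 2 (Vp × Vm) →ₗ[ℝ] _) := fun x =>
  WithLp.ofLp_injective 2 (Prod.ext rfl (neg_neg x.snd))

theorem LinearPMap.mem_orthogonal_comap_graph_iff {E F : Type*} [NormedAddCommGroup E]
    [InnerProductSpace ℝ E] [CompleteSpace E] [NormedAddCommGroup F] [InnerProductSpace ℝ F]
    {T : E →ₗ.[ℝ] F} (hT : Dense (T.domain : Set E)) (z : WithLp 2 (E × F)) :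
    z ∈ (T.graph.comap unL2)ᗮ ↔ (z.snd, -z.fst) ∈ T.adjoint.graph := by
  rw [adjoint_graph_eq_graph_adjoint hT, Submodule.mem_adjoint_iff, Submodule.mem_orthogonal]
  simp only [inner_neg_right, sub_neg_eq_add, Submodule.mem_comap, WithLp.prod_inner_apply]
  refine ⟨fun h a b hab => ?_, fun h w hw => ?_⟩
  · exact (add_comm _ _).trans (h (WithLp.toLp 2 (a, b)) hab)
  · exact (add_comm _ _).trans (h w.fst w.snd hw)

section Corr

variable {Ap Am Bp Bm : Type*} [NormedAddCommGroup Ap] [InnerProductSpace ℝ Ap]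
  [NormedAddCommGroup Am] [InnerProductSpace ℝ Am]
  [NormedAddCommGroup Bp] [InnerProductSpace ℝ Bp]
  [NormedAddCommGroup Bm] [InnerProductSpace ℝ Bm]

theorem corrGrading_involutive :
    Involutive (corrGrading : WithLp 2 (WithLp 2 (Ap × Am) × WithLp 2 (Bp × Bm)) →ₗ[ℝ] _) :=
  fun z => WithLp.ofLp_injective 2 <| Prod.ext
    (show -sGrading (-sGrading z.fst) = z.fst by rw [map_neg, neg_neg, sGrading_involutive])
    (sGrading_involutive z.snd)

theorem isLagCorr_comap_graph_iff [CompleteSpace Ap] [CompleteSpace Am]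
    {T : WithLp 2 (Ap × Am) →ₗ.[ℝ] WithLp 2 (Bp × Bm)}
    (hT : Dense (T.domain : Set (WithLp 2 (Ap × Am)))) :
    IsLagCorr (T.graph.comap unL2) ↔
      ∀ a b, (a, b) ∈ T.graph ↔ (sGrading b, sGrading a) ∈ T.adjoint.graph := by
  have hΓ := corrGrading_involutive (Ap := Ap) (Am := Am) (Bp := Bp) (Bm := Bm)
  have hfst (z : WithLp 2 (WithLp 2 (Ap × Am) × WithLp 2 (Bp × Bm))) :
      -(corrGrading z).fst = sGrading z.fst :=
    neg_neg _
  rw [IsLagCorr, IsLagrangianWith, SetLike.ext_iff, hΓ.surjective.forall]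
  simp only [Submodule.mem_map_iff_of_inverse hΓ.leftInverse hΓ.rightInverse, hΓ _,
    LinearPMap.mem_orthogonal_comap_graph_iff hT, hfst]
  exact ⟨fun h a b => h (WithLp.toLp 2 (a, b)), fun h z => h z.fst z.snd⟩

end Corr

/-- `T⁻¹ = Γ₀ T* Γ₁` is stated as an equality of graphs: the graph of `T⁻¹` is the flipped
graph of `T`, and that of `Γ₀ T* Γ₁` is the image of the graph of `T*` under `Γ₁ × Γ₀`. -/
theorem graph_lagrangian_iff_inverse_eq_graded_adjoint_general
    {V0p V0m V1p V1m : Type*}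
    [NormedAddCommGroup V0p] [InnerProductSpace ℝ V0p] [CompleteSpace V0p]
    [NormedAddCommGroup V0m] [InnerProductSpace ℝ V0m] [CompleteSpace V0m]
    [NormedAddCommGroup V1p] [InnerProductSpace ℝ V1p]
    [NormedAddCommGroup V1m] [InnerProductSpace ℝ V1m]
    (T : WithLp 2 (V0p × V0m) →ₗ.[ℝ] WithLp 2 (V1p × V1m))
    (hdom : Dense (T.domain : Set (WithLp 2 (V0p × V0m)))) :
    IsLagCorr (T.graph.comap
        (unL2 : WithLp 2 (WithLp 2 (V0p × V0m) × WithLp 2 (V1p × V1m)) →ₗ[ℝ] _)) ↔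
      T.graph.map ((LinearMap.snd ℝ (WithLp 2 (V0p × V0m)) (WithLp 2 (V1p × V1m))).prod
          (LinearMap.fst ℝ (WithLp 2 (V0p × V0m)) (WithLp 2 (V1p × V1m)))) =
        (T.adjoint).graph.map
          ((sGrading : WithLp 2 (V1p × V1m) →ₗ[ℝ] WithLp 2 (V1p × V1m)).prodMap
            (sGrading : WithLp 2 (V0p × V0m) →ₗ[ℝ] WithLp 2 (V0p × V0m))) := by
  rw [isLagCorr_comap_graph_iff hdom,
    Submodule.map_swap_eq_map_prodMap_iff sGrading_involutive sGrading_involutive]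

/-- For an invertible closed densely defined operator `T : V₀ → V₁`,
`graph(T)` is a Lagrangian in `ΠV₀ ⊕ V₁` if and only if `T⁻¹ = Γ₀ T* Γ₁` (stated as an
equality of graphs: the graph of `T⁻¹` is the flip of `graph T`, and the graph of
`Γ₀ T* Γ₁` is the image of the graph of the adjoint `T†` under `Γ₁ × Γ₀`). -/
theorem graph_lagrangian_iff_inverse_eq_graded_adjoint
    {V0p V0m V1p V1m : Type*}
    [NormedAddCommGroup V0p] [InnerProductSpace ℝ V0p] [CompleteSpace V0p]
    [NormedAddCommGroup V0m] [InnerProductSpace ℝ V0m] [CompleteSpace V0m]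
    [NormedAddCommGroup V1p] [InnerProductSpace ℝ V1p] [CompleteSpace V1p]
    [NormedAddCommGroup V1m] [InnerProductSpace ℝ V1m] [CompleteSpace V1m]
    (T : WithLp 2 (V0p × V0m) →ₗ.[ℝ] WithLp 2 (V1p × V1m))
    (hdom : Dense (T.domain : Set (WithLp 2 (V0p × V0m))))
    (hclosed : IsClosed ((T.graph : Submodule ℝ (WithLp 2 (V0p × V0m) × WithLp 2 (V1p × V1m))) :
      Set (WithLp 2 (V0p × V0m) × WithLp 2 (V1p × V1m))))
    (hinj : ∀ x : T.domain, T x = 0 → (x : WithLp 2 (V0p × V0m)) = 0)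
    (hran : Dense (Set.range fun x : T.domain => T x)) :
    IsLagCorr (T.graph.comap
        (unL2 : WithLp 2 (WithLp 2 (V0p × V0m) × WithLp 2 (V1p × V1m)) →ₗ[ℝ] _)) ↔
      T.graph.map ((LinearMap.snd ℝ (WithLp 2 (V0p × V0m)) (WithLp 2 (V1p × V1m))).prod
          (LinearMap.fst ℝ (WithLp 2 (V0p × V0m)) (WithLp 2 (V1p × V1m)))) =
        (T.adjoint).graph.map
          ((sGrading : WithLp 2 (V1p × V1m) →ₗ[ℝ] WithLp 2 (V1p × V1m)).prodMap
            (sGrading : WithLp 2 (V0p × V0m) →ₗ[ℝ] WithLp 2 (V0p × V0m))) :=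
  graph_lagrangian_iff_inverse_eq_graded_adjoint_general T hdom
end
end

section
/- With notation as in the correspondence between a Lagrangian in general position written as graph(T) and graph(u): the operator T is unitary if and only if the diagonal blocks of u vanish, u₀₀ = u₁₁ = 0; in that case T is block diagonal (T₊₋ = T₋₊ = 0) and u₁₀, u₀₁ are unitary. -/
noncomputable section

open Submodule ContinuousLinearMap

/-- The full graph of a bounded operator `S : E → F`, inside `E ⊕ F`. -/
def graphFullCorr {E F : Type*} [NormedAddCommGroup E] [InnerProductSpace ℝ E]
    [NormedAddCommGroup F] [InnerProductSpace ℝ F] (S : E →L[ℝ] F) :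
    Submodule ℝ (WithLp 2 (E × F)) :=
  (⊤ : Submodule ℝ E).map (mkL2 ∘ₗ (LinearMap.id : E →ₗ[ℝ] E).prod S.toLinearMap)

/-!
On the common graph `S ((u z)₀, z₀) = (z₁, (u z)₁)`. That `S` and `u` both preserve norms gives
`‖(u z)₀‖² + ‖z₀‖² = ‖z₁‖² + ‖(u z)₁‖²` and `‖(u z)₀‖² + ‖(u z)₁‖² = ‖z₀‖² + ‖z₁‖²`; their sum
and difference give `‖(u z)₀‖ = ‖z₁‖` and `‖(u z)₁‖ = ‖z₀‖`, which for `z` in `V₀⁻` or in `V₁⁺`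
alone kill `u₀₀` and `u₁₁`. Conversely, for off-diagonal `u` the blocks `u₀₁`, `u₁₀` are unitary
and `S = u₀₁⁻¹ ⊕ u₁₀` has the graph of `u`.
-/

section Pairs

variable {α β : Type*} [AddCommGroup α] [Module ℝ α] [AddCommGroup β] [Module ℝ β]

@[simp]
theorem fst_p2 (a : α) (b : β) : (p2 a b).fst = a :=
  rfl

@[simp]
theorem snd_p2 (a : α) (b : β) : (p2 a b).snd = b :=
  rfl

end Pairs

section Unitary

variable {E F : Type*} [NormedAddCommGroup E] [InnerProductSpace ℝ E]
  [NormedAddCommGroup F] [InnerProductSpace ℝ F]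

def IsUnitaryOp.toLinearIsometryEquiv {u : E →L[ℝ] F} (hu : IsUnitaryOp u) : E ≃ₗᵢ[ℝ] F :=
  LinearIsometryEquiv.ofSurjective ⟨u.toLinearMap, hu.1⟩ hu.2

theorem LinearIsometryEquiv.isUnitaryOp (e : E ≃ₗᵢ[ℝ] F) : IsUnitaryOp (e : E →L[ℝ] F) :=
  ⟨e.norm_map, e.surjective⟩

end Unitary

section Graph

variable {Ap Am Bp Bm : Type*} [NormedAddCommGroup Ap] [InnerProductSpace ℝ Ap]
  [NormedAddCommGroup Am] [InnerProductSpace ℝ Am]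
  [NormedAddCommGroup Bp] [InnerProductSpace ℝ Bp]
  [NormedAddCommGroup Bm] [InnerProductSpace ℝ Bm]
  {u : WithLp 2 (Am × Bp) →L[ℝ] WithLp 2 (Ap × Bm)}
  {S : WithLp 2 (Ap × Am) →L[ℝ] WithLp 2 (Bp × Bm)}

theorem corrGraphMap_apply (z : WithLp 2 (Am × Bp)) :
    corrGraphMap u z = p2 (p2 (u z).fst z.fst) (p2 z.snd (u z).snd) :=
  rfl

theorem mem_graphFullCorr_iff {q : WithLp 2 (WithLp 2 (Ap × Am) × WithLp 2 (Bp × Bm))} :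
    q ∈ graphFullCorr S ↔ ∃ e, p2 e (S e) = q := by
  simp [graphFullCorr]

theorem apply_eq_of_graphFullCorr_eq_corrGraph (hgraph : graphFullCorr S = corrGraph u)
    (z : WithLp 2 (Am × Bp)) : S (p2 (u z).fst z.fst) = p2 z.snd (u z).snd := by
  have hmem : corrGraphMap u z ∈ graphFullCorr S := hgraph ▸ LinearMap.mem_range_self _ z
  obtain ⟨e, he⟩ := mem_graphFullCorr_iff.1 hmem
  rw [corrGraphMap_apply] at he
  obtain ⟨rfl, hSe⟩ : e = _ ∧ S e = _ := by simpa using he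
  exact hSe

theorem norm_fst_apply_eq_and_norm_snd_apply_eq (hu : ∀ z, ‖u z‖ = ‖z‖)
    (hS : ∀ x, ‖S x‖ = ‖x‖) (hgraph : graphFullCorr S = corrGraph u) (z : WithLp 2 (Am × Bp)) :
    ‖(u z).fst‖ = ‖z.snd‖ ∧ ‖(u z).snd‖ = ‖z.fst‖ := by
  have hSz := congrArg (· ^ 2) (hS (p2 (u z).fst z.fst))
  have huz := congrArg (· ^ 2) (hu z)
  simp only [apply_eq_of_graphFullCorr_eq_corrGraph hgraph, WithLp.prod_norm_sq_eq_of_L2, fst_p2,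
    snd_p2] at hSz huz
  constructor <;> refine (sq_eq_sq₀ (norm_nonneg _) (norm_nonneg _)).1 ?_
  · linarith
  · linarith

theorem diagonal_blocks_eq_zero_of_graphFullCorr_eq_corrGraph
    {u00 : Am →L[ℝ] Ap} {u01 : Bp →L[ℝ] Ap} {u10 : Am →L[ℝ] Bm} {u11 : Bp →L[ℝ] Bm}
    (hblocks : ∀ z, u z = p2 (u00 z.fst + u01 z.snd) (u10 z.fst + u11 z.snd))
    (hu : ∀ z, ‖u z‖ = ‖z‖) (hS : ∀ x, ‖S x‖ = ‖x‖) (hgraph : graphFullCorr S = corrGraph u) :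
    u00 = 0 ∧ u11 = 0 := by
  have h := norm_fst_apply_eq_and_norm_snd_apply_eq hu hS hgraph
  constructor
  · ext b
    simpa [hblocks] using (h (p2 b 0)).1
  · ext c
    simpa [hblocks] using (h (p2 0 c)).2

variable {u01 : Bp →L[ℝ] Ap} {u10 : Am →L[ℝ] Bm}

theorem isUnitaryOp_blocks_of_offDiagonal (hu : IsUnitaryOp u)
    (hoff : ∀ z, u z = p2 (u01 z.snd) (u10 z.fst)) : IsUnitaryOp u01 ∧ IsUnitaryOp u10 := by
  refine ⟨⟨fun c => ?_, fun a => ?_⟩, ⟨fun b => ?_, fun d => ?_⟩⟩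
  · simpa [hoff, WithLp.prod_norm_eq_of_L2] using hu.1 (p2 0 c)
  · obtain ⟨z, hz⟩ := hu.2 (p2 a 0)
    exact ⟨z.snd, by simpa [hoff] using congrArg WithLp.fst hz⟩
  · simpa [hoff, WithLp.prod_norm_eq_of_L2] using hu.1 (p2 b 0)
  · obtain ⟨z, hz⟩ := hu.2 (p2 0 d)
    exact ⟨z.fst, by simpa [hoff] using congrArg WithLp.snd hz⟩

theorem blockDiagonal_of_graphFullCorr_eq_corrGraph
    (hoff : ∀ z, u z = p2 (u01 z.snd) (u10 z.fst)) (h01 : Function.Surjective u01)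
    (hgraph : graphFullCorr S = corrGraph u) :
    (∀ x, (S (p2 x 0)).snd = 0) ∧ (∀ y, (S (p2 0 y)).fst = 0) := by
  constructor
  · intro x
    obtain ⟨c, rfl⟩ := h01 x
    simpa [hoff] using congrArg WithLp.snd (apply_eq_of_graphFullCorr_eq_corrGraph hgraph (p2 0 c))
  · intro y
    simpa [hoff] using congrArg WithLp.fst (apply_eq_of_graphFullCorr_eq_corrGraph hgraph (p2 y 0))

theorem graphFullCorr_withLpProdCongr_eq_corrGraph (e01 : Bp ≃ₗᵢ[ℝ] Ap) (e10 : Am ≃ₗᵢ[ℝ] Bm)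
    (hoff : ∀ z, u z = p2 (e01 z.snd) (e10 z.fst)) :
    graphFullCorr (LinearIsometryEquiv.withLpProdCongr 2 e01.symm e10 :
      WithLp 2 (Ap × Am) →L[ℝ] WithLp 2 (Bp × Bm)) = corrGraph u := by
  ext q
  rw [mem_graphFullCorr_iff]
  constructor
  · rintro ⟨⟨a, b⟩, rfl⟩
    exact ⟨p2 b (e01.symm a), by simp [corrGraphMap_apply, hoff]⟩
  · rintro ⟨z, rfl⟩
    exact ⟨p2 (e01 z.snd) z.fst, by simp [corrGraphMap_apply, hoff]⟩

end Graph

theorem graph_operator_unitary_iff_offdiagonal_general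
    {V0p V0m V1p V1m : Type*}
    [NormedAddCommGroup V0p] [InnerProductSpace ℝ V0p]
    [NormedAddCommGroup V0m] [InnerProductSpace ℝ V0m]
    [NormedAddCommGroup V1p] [InnerProductSpace ℝ V1p]
    [NormedAddCommGroup V1m] [InnerProductSpace ℝ V1m]
    (u : WithLp 2 (V0m × V1p) →L[ℝ] WithLp 2 (V0p × V1m))
    (u00 : V0m →L[ℝ] V0p) (u01 : V1p →L[ℝ] V0p) (u10 : V0m →L[ℝ] V1m) (u11 : V1p →L[ℝ] V1m)
    (hblocks : ∀ x : WithLp 2 (V0m × V1p),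
      u x = p2 (u00 x.fst + u01 x.snd) (u10 x.fst + u11 x.snd))
    (huni : IsUnitaryOp u) :
    ((∃ S : WithLp 2 (V0p × V0m) →L[ℝ] WithLp 2 (V1p × V1m), IsUnitaryOp S ∧
        graphFullCorr S = corrGraph u) ↔ (u00 = 0 ∧ u11 = 0)) ∧
    (∀ S : WithLp 2 (V0p × V0m) →L[ℝ] WithLp 2 (V1p × V1m), IsUnitaryOp S →
      graphFullCorr S = corrGraph u →
        ((∀ x : V0p, (S (p2 x 0)).snd = 0) ∧ (∀ y : V0m, (S (p2 0 y)).fst = 0) ∧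
          IsUnitaryOp u01 ∧ IsUnitaryOp u10)) := by
  have diagonal_eq_zero (S : WithLp 2 (V0p × V0m) →L[ℝ] WithLp 2 (V1p × V1m))
      (hS : IsUnitaryOp S) (hgraph : graphFullCorr S = corrGraph u) : u00 = 0 ∧ u11 = 0 :=
    diagonal_blocks_eq_zero_of_graphFullCorr_eq_corrGraph hblocks huni.1 hS.1 hgraph
  have offDiagonal (h00 : u00 = 0) (h11 : u11 = 0) (z : WithLp 2 (V0m × V1p)) :
      u z = p2 (u01 z.snd) (u10 z.fst) := by
    simp [hblocks, h00, h11]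
  refine ⟨⟨fun ⟨S, hS, hgraph⟩ => diagonal_eq_zero S hS hgraph, fun ⟨h00, h11⟩ => ?_⟩,
    fun S hS hgraph => ?_⟩
  · obtain ⟨h01, h10⟩ := isUnitaryOp_blocks_of_offDiagonal huni (offDiagonal h00 h11)
    let T := LinearIsometryEquiv.withLpProdCongr 2 h01.toLinearIsometryEquiv.symm
      h10.toLinearIsometryEquiv
    exact ⟨T, T.isUnitaryOp, graphFullCorr_withLpProdCongr_eq_corrGraph _ _ (offDiagonal h00 h11)⟩
  · obtain ⟨h00, h11⟩ := diagonal_eq_zero S hS hgraph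
    obtain ⟨h01, h10⟩ := isUnitaryOp_blocks_of_offDiagonal huni (offDiagonal h00 h11)
    obtain ⟨hx, hy⟩ :=
      blockDiagonal_of_graphFullCorr_eq_corrGraph (offDiagonal h00 h11) h01.2 hgraph
    exact ⟨hx, hy, h01, h10⟩

/-- The operator `T` with `graph(T) = graph(u)` (a Lagrangian in general
position) is unitary if and only if the diagonal blocks of `u` vanish; in that case `T` is
block diagonal and `u₁₀`, `u₀₁` are unitary. -/
theorem graph_operator_unitary_iff_offdiagonal
    {V0p V0m V1p V1m : Type*}
    [NormedAddCommGroup V0p] [InnerProductSpace ℝ V0p] [CompleteSpace V0p]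
    [NormedAddCommGroup V0m] [InnerProductSpace ℝ V0m] [CompleteSpace V0m]
    [NormedAddCommGroup V1p] [InnerProductSpace ℝ V1p] [CompleteSpace V1p]
    [NormedAddCommGroup V1m] [InnerProductSpace ℝ V1m] [CompleteSpace V1m]
    (u : WithLp 2 (V0m × V1p) →L[ℝ] WithLp 2 (V0p × V1m))
    (u00 : V0m →L[ℝ] V0p) (u01 : V1p →L[ℝ] V0p) (u10 : V0m →L[ℝ] V1m) (u11 : V1p →L[ℝ] V1m)
    (hblocks : ∀ x : WithLp 2 (V0m × V1p),
      u x = p2 (u00 x.fst + u01 x.snd) (u10 x.fst + u11 x.snd))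
    (huni : IsUnitaryOp u)
    (hgen1 : ∀ p ∈ corrGraph u, p.snd = 0 → p = 0)
    (hgen2 : ∀ p ∈ corrGraph u, p.fst = 0 → p = 0) :
    ((∃ S : WithLp 2 (V0p × V0m) →L[ℝ] WithLp 2 (V1p × V1m), IsUnitaryOp S ∧
        graphFullCorr S = corrGraph u) ↔ (u00 = 0 ∧ u11 = 0)) ∧
    (∀ S : WithLp 2 (V0p × V0m) →L[ℝ] WithLp 2 (V1p × V1m), IsUnitaryOp S →
      graphFullCorr S = corrGraph u →
        ((∀ x : V0p, (S (p2 x 0)).snd = 0) ∧ (∀ y : V0m, (S (p2 0 y)).fst = 0) ∧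
          IsUnitaryOp u01 ∧ IsUnitaryOp u10)) :=
  graph_operator_unitary_iff_offdiagonal_general u u00 u01 u10 u11 hblocks huni
end
end
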